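/- arXiv:1110.1149 — 2 statements merged into one kernel-verified Lean document; each statement's English description precedes it below -/
import Mathlib

section
/- Suppose s > 0, h > 0 and points x = (x₁,x₂), y = (y₁,y₂) satisfy the isorange condition √((x₁-s)²+x₂²+h²) + √((x₁+s)²+x₂²+h²) = √((y₁-s)²+y₂²+h²) + √((y₁+s)²+y₂²+h²) and the isodoppler condition (x₁-s)/√((x₁-s)²+x₂²+h²) - (x₁+s)/√((x₁+s)²+x₂²+h²) = (y₁-s)/√((y₁-s)²+y₂²+h²) - (y₁+s)/√((y₁+s)²+y₂²+h²). Then (|x₁|, |x₂|) = (|y₁|, |y₂|); that is, y ∈ {(x₁,x₂), (x₁,-x₂), (-x₁,x₂), (-x₁,-x₂)}. -/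
set_option maxHeartbeats 1000000


theorem stmt10 (s h x₁ x₂ y₁ y₂ : ℝ) (hs : 0 < s) (hh : 0 < h)
    (hrange :
      Real.sqrt ((x₁ - s) ^ 2 + x₂ ^ 2 + h ^ 2) + Real.sqrt ((x₁ + s) ^ 2 + x₂ ^ 2 + h ^ 2)
      = Real.sqrt ((y₁ - s) ^ 2 + y₂ ^ 2 + h ^ 2) + Real.sqrt ((y₁ + s) ^ 2 + y₂ ^ 2 + h ^ 2))
    (hdoppler :
      (x₁ - s) / Real.sqrt ((x₁ - s) ^ 2 + x₂ ^ 2 + h ^ 2)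
        - (x₁ + s) / Real.sqrt ((x₁ + s) ^ 2 + x₂ ^ 2 + h ^ 2)
      = (y₁ - s) / Real.sqrt ((y₁ - s) ^ 2 + y₂ ^ 2 + h ^ 2)
        - (y₁ + s) / Real.sqrt ((y₁ + s) ^ 2 + y₂ ^ 2 + h ^ 2)) :
    (|x₁| = |y₁| ∧ |x₂| = |y₂|) ∧
    ((y₁, y₂) = (x₁, x₂) ∨ (y₁, y₂) = (x₁, -x₂) ∨
     (y₁, y₂) = (-x₁, x₂) ∨ (y₁, y₂) = (-x₁, -x₂)) := by
  set a := Real.sqrt ((x₁ - s) ^ 2 + x₂ ^ 2 + h ^ 2) with ha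
  set b := Real.sqrt ((x₁ + s) ^ 2 + x₂ ^ 2 + h ^ 2) with hb
  set c := Real.sqrt ((y₁ - s) ^ 2 + y₂ ^ 2 + h ^ 2) with hc
  set d := Real.sqrt ((y₁ + s) ^ 2 + y₂ ^ 2 + h ^ 2) with hd
  have ha2 : a ^ 2 = (x₁ - s) ^ 2 + x₂ ^ 2 + h ^ 2 := Real.sq_sqrt (by positivity)
  have hb2 : b ^ 2 = (x₁ + s) ^ 2 + x₂ ^ 2 + h ^ 2 := Real.sq_sqrt (by positivity)
  have hc2 : c ^ 2 = (y₁ - s) ^ 2 + y₂ ^ 2 + h ^ 2 := Real.sq_sqrt (by positivity)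
  have hd2 : d ^ 2 = (y₁ + s) ^ 2 + y₂ ^ 2 + h ^ 2 := Real.sq_sqrt (by positivity)
  have hapos : 0 < a := Real.sqrt_pos.mpr (by positivity)
  have hbpos : 0 < b := Real.sqrt_pos.mpr (by positivity)
  have hcpos : 0 < c := Real.sqrt_pos.mpr (by positivity)
  have hdpos : 0 < d := Real.sqrt_pos.mpr (by positivity)
  -- a > |x₁ - s|, b > |x₁ + s|
  have hagt : |x₁ - s| < a := by
    rw [ha, show |x₁ - s| = Real.sqrt ((x₁ - s) ^ 2) from (Real.sqrt_sq_eq_abs _).symm]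
    exact Real.sqrt_lt_sqrt (by positivity) (by nlinarith)
  have hbgt : |x₁ + s| < b := by
    rw [hb, show |x₁ + s| = Real.sqrt ((x₁ + s) ^ 2) from (Real.sqrt_sq_eq_abs _).symm]
    exact Real.sqrt_lt_sqrt (by positivity) (by nlinarith)
  have hR : 2 * s < a + b := by
    have h1 := le_abs_self (x₁ + s)
    have h2 := neg_abs_le (x₁ - s)
    linarith
  -- cross-multiplied doppler condition
  rw [div_sub_div _ _ hapos.ne' hbpos.ne', div_sub_div _ _ hcpos.ne' hdpos.ne',
    div_eq_div_iff (by positivity) (by positivity)] at hdoppler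
  have hx1 : b ^ 2 - a ^ 2 = 4 * s * x₁ := by rw [ha2, hb2]; ring
  have hy1' : d ^ 2 - c ^ 2 = 4 * s * y₁ := by rw [hc2, hd2]; ring
  have hNx : 4 * s * ((x₁ - s) * b - a * (x₁ + s)) = (a + b) * ((a - b) ^ 2 - 4 * s ^ 2) := by
    linear_combination (a - b) * hx1
  have hNy : 4 * s * ((y₁ - s) * d - c * (y₁ + s)) = (c + d) * ((c - d) ^ 2 - 4 * s ^ 2) := by
    linear_combination (c - d) * hy1'
  have h4 : (a + b) * (((a - b) ^ 2 - 4 * s ^ 2) * (c * d)) =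
      (a + b) * (((c - d) ^ 2 - 4 * s ^ 2) * (a * b)) := by
    linear_combination 4 * s * hdoppler - (c * d) * hNx + (a * b) * hNy -
      ((c - d) ^ 2 - 4 * s ^ 2) * (a * b) * hrange
  have key : ((a - b) ^ 2 - 4 * s ^ 2) * (c * d) = ((c - d) ^ 2 - 4 * s ^ 2) * (a * b) :=
    mul_left_cancel₀ (by positivity) h4
  have hP : 0 < (a + b) ^ 2 - 4 * s ^ 2 := by nlinarith
  have hzero : ((a + b) ^ 2 - 4 * s ^ 2) * (c * d - a * b) = 0 := by
    linear_combination key - ((c + d) + (a + b)) * (a * b) * hrange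
  have habcd : a * b = c * d := by
    rcases mul_eq_zero.mp hzero with h | h
    · exact absurd h hP.ne'
    · linarith
  have hsum : a ^ 2 + b ^ 2 = c ^ 2 + d ^ 2 := by
    linear_combination (a + b + c + d) * hrange - 2 * habcd
  have hq : x₁ ^ 2 + x₂ ^ 2 = y₁ ^ 2 + y₂ ^ 2 := by
    have := hsum
    rw [ha2, hb2, hc2, hd2] at this
    linarith
  have hprod : a ^ 2 * b ^ 2 = c ^ 2 * d ^ 2 := by
    linear_combination (a * b + c * d) * habcd
  rw [ha2, hb2, hc2, hd2] at hprod
  have h4s : 4 * s ^ 2 * x₁ ^ 2 = 4 * s ^ 2 * y₁ ^ 2 := by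
    linear_combination (x₁ ^ 2 + x₂ ^ 2 + h ^ 2 + s ^ 2 + y₁ ^ 2 + y₂ ^ 2 + h ^ 2 + s ^ 2) * hq
      - hprod
  have hx1sq : x₁ ^ 2 = y₁ ^ 2 :=
    mul_left_cancel₀ (by positivity : (0:ℝ) < 4 * s ^ 2).ne' h4s
  have hx2sq : x₂ ^ 2 = y₂ ^ 2 := by linarith
  have hy1 : y₁ = x₁ ∨ y₁ = -x₁ := by
    rcases mul_eq_zero.mp (show (y₁ - x₁) * (y₁ + x₁) = 0 by linear_combination -hx1sq) with h | h
    · left; linarith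
    · right; linarith
  have hy2 : y₂ = x₂ ∨ y₂ = -x₂ := by
    rcases mul_eq_zero.mp (show (y₂ - x₂) * (y₂ + x₂) = 0 by linear_combination -hx2sq) with h | h
    · left; linarith
    · right; linarith
  constructor
  · constructor
    · rcases hy1 with h | h <;> rw [h] <;> simp [abs_neg]
    · rcases hy2 with h | h <;> rw [h] <;> simp [abs_neg]
  · rcases hy1 with h1 | h1 <;> rcases hy2 with h2 | h2 <;> subst h1 <;> subst h2 <;> simp
end

section
/- For all x₁, x₂, s, h ∈ ℝ with h > 0 and (x₁,x₂) ≠ (0,0), the gradient in x of the bistatic distance R(s,x) = √((x₁-s)²+x₂²+h²) + √((x₁+s)²+x₂²+h²) is nonzero when s > 0: i.e., the vector ((x₁-s)/A + (x₁+s)/B, x₂/A + x₂/B) ≠ (0,0), where A = √((x₁-s)²+x₂²+h²), B = √((x₁+s)²+x₂²+h²). -/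
theorem stmt15 (s h x₁ x₂ : ℝ) (hs : 0 < s) (hh : 0 < h) (hx : (x₁, x₂) ≠ (0, 0)) :
    ((x₁ - s) / Real.sqrt ((x₁ - s) ^ 2 + x₂ ^ 2 + h ^ 2)
       + (x₁ + s) / Real.sqrt ((x₁ + s) ^ 2 + x₂ ^ 2 + h ^ 2),
     x₂ / Real.sqrt ((x₁ - s) ^ 2 + x₂ ^ 2 + h ^ 2)
       + x₂ / Real.sqrt ((x₁ + s) ^ 2 + x₂ ^ 2 + h ^ 2)) ≠ ((0 : ℝ), (0 : ℝ)) := by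
  have hA2 : (0:ℝ) < (x₁ - s) ^ 2 + x₂ ^ 2 + h ^ 2 := by positivity
  have hB2 : (0:ℝ) < (x₁ + s) ^ 2 + x₂ ^ 2 + h ^ 2 := by positivity
  set A := Real.sqrt ((x₁ - s) ^ 2 + x₂ ^ 2 + h ^ 2) with hAdef
  set B := Real.sqrt ((x₁ + s) ^ 2 + x₂ ^ 2 + h ^ 2) with hBdef
  have hA : 0 < A := Real.sqrt_pos.mpr hA2
  have hB : 0 < B := Real.sqrt_pos.mpr hB2
  have hAsq : A ^ 2 = (x₁ - s) ^ 2 + x₂ ^ 2 + h ^ 2 := Real.sq_sqrt hA2.le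
  have hBsq : B ^ 2 = (x₁ + s) ^ 2 + x₂ ^ 2 + h ^ 2 := Real.sq_sqrt hB2.le
  intro heq
  have h1 : (x₁ - s) / A + (x₁ + s) / B = 0 := congrArg Prod.fst heq
  have h2 : x₂ / A + x₂ / B = 0 := congrArg Prod.snd heq
  have hx2 : x₂ = 0 := by
    rw [div_add_div _ _ (ne_of_gt hA) (ne_of_gt hB), div_eq_zero_iff] at h2
    rcases h2 with h2 | h2
    · nlinarith
    · nlinarith
  have hx1 : x₁ ≠ 0 := by
    intro h0
    exact hx (by rw [h0, hx2])
  rw [div_add_div _ _ (ne_of_gt hA) (ne_of_gt hB)] at h1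
  have h1' : (x₁ - s) * B + (x₁ + s) * A = 0 := by
    rcases div_eq_zero_iff.mp h1 with h | h
    · linear_combination h
    · nlinarith
  have hsq : (x₁ - s) ^ 2 * B ^ 2 = (x₁ + s) ^ 2 * A ^ 2 := by linear_combination ((x₁ - s) * B - (x₁ + s) * A) * h1'
  rw [hAsq, hBsq, hx2] at hsq
  have hxs : x₁ * s * h ^ 2 = 0 := by nlinarith
  rcases mul_eq_zero.mp hxs with h | h
  · rcases mul_eq_zero.mp h with h | h
    · exact hx1 h
    · linarith
  · nlinarith
end
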